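/- arXiv:2009.02728 — 2 statements merged into one kernel-verified Lean document; each statement's English description precedes it below -/
import Mathlib

section
/- Let G be a finite directed graph on vertex set V, let 𝕏, ℤ ⊆ V be disjoint sets of vertices (actionable and control variables), let y ∈ V \ (𝕏 ∪ ℤ) be a distinguished vertex (the target), and let U = V \ (𝕏 ∪ ℤ ∪ {y}) (the unobserved variables). Assume: (a) there is no edge from y to any vertex of 𝕏; (b) there is no edge from any vertex of 𝕏 to any vertex of ℤ; (c) there is no edge (in either direction) between any two distinct vertices of 𝕏; (d) there is no edge (in either direction) between any vertex of U and any vertex of 𝕏. Then for every x ∈ 𝕏, every spurious path from x to y is blocked by ℤ. -/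
/-- In a finite directed graph, under the admissibility
conditions (a)–(d), every spurious path from any actionable variable `x ∈ 𝕏`
to the target `y` is blocked by the control set `ℤ`.  A path is represented by
a function `v : ℕ → V` on indices `0, …, k` (pairwise distinct, consecutive
vertices joined by an edge in at least one direction); it is spurious if the
first edge is incoming at `x`, and blocked by `Zc` if some internal vertex is
a collider not in `Zc`, or a non-collider in `Zc`. -/
theorem spurious_paths_blocked {V : Type*} [Fintype V]
    (E : V → V → Prop) (𝕏 Zc : Set V) (y : V)
    (hdisj : Disjoint 𝕏 Zc) (hy : y ∉ 𝕏 ∪ Zc)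
    (ha : ∀ x ∈ 𝕏, ¬ E y x)
    (hb : ∀ x ∈ 𝕏, ∀ z ∈ Zc, ¬ E x z)
    (hc : ∀ x ∈ 𝕏, ∀ x' ∈ 𝕏, x ≠ x' → ¬ E x x')
    (hd : ∀ u, u ∉ 𝕏 → u ∉ Zc → u ≠ y → ∀ x ∈ 𝕏, ¬ E u x ∧ ¬ E x u)
    (x : V) (hx : x ∈ 𝕏)
    (k : ℕ) (hk : 1 ≤ k) (v : ℕ → V)
    (hinj : ∀ i ≤ k, ∀ j ≤ k, v i = v j → i = j)
    (hstart : v 0 = x) (hend : v k = y)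
    (hadj : ∀ i < k, E (v i) (v (i + 1)) ∨ E (v (i + 1)) (v i))
    (hspur : E (v 1) (v 0)) :
    ∃ i, 0 < i ∧ i < k ∧
      ((E (v (i - 1)) (v i) ∧ E (v (i + 1)) (v i)) ∧ v i ∉ Zc ∨
       ¬(E (v (i - 1)) (v i) ∧ E (v (i + 1)) (v i)) ∧ v i ∈ Zc) := by
  -- First, v 1 ∈ Zc: every other possibility for v 1 is ruled out.
  have h10 : v 1 ≠ v 0 := fun h => by simpa using hinj 1 hk 0 (Nat.zero_le _) h
  have hxne : v 1 ≠ x := by rw [← hstart]; exact h10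
  have hvy : v 1 ≠ y := by
    intro h
    exact ha x hx (by rw [← h, ← hstart]; exact hspur)
  have hv1 : v 1 ∈ Zc := by
    by_contra hz
    by_cases hX : v 1 ∈ 𝕏
    · exact hc (v 1) hX x hx hxne (by rw [← hstart]; exact hspur)
    · exact (hd (v 1) hX hz hvy x hx).1 (by rw [← hstart]; exact hspur)
  have hk2 : 1 < k := by
    rcases lt_or_eq_of_le hk with h | h
    · exact h
    · exact absurd (h ▸ hend : v 1 = y) hvy
  refine ⟨1, one_pos, hk2, Or.inr ⟨?_, hv1⟩⟩
  rintro ⟨h1, -⟩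
  exact hb x hx (v 1) hv1 (by rw [← hstart]; simpa using h1)
end

section
/- Fix natural numbers a, b, n₁, n with a ≤ n₁ ≤ n and a + b ≤ n, set β = 0, and let C = {0, 1, …, a} × {0, 1, …, b} be the set of all contingency-table configurations (a', b') reachable by refinements of a rule with counts (a, b). Then the maximum of τ over C is attained on the line b' = 0: max_{(a',b') ∈ C} τ(a', b') = max_{a' ∈ {0,…,a}} τ(a', 0), where τ(a', 0) = (a'+1)/(a'+2) − (n₁−a'+1)/(n−a'+2). -/
/-!
For fixed `a'`, enlarging `b'` enlarges the denominator of the first fraction and shrinks the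
(positive) denominator of the subtracted one, while both numerators stay nonnegative; so
`τ(a', b') ≤ τ(a', 0)` and the maximum over the rectangle is attained on its edge `b' = 0`.
-/

namespace Finset

theorem sup'_product_eq_sup'_of_le_right {α β γ : Type*} [SemilatticeSup γ] {s : Finset α}
    {t : Finset β} (hs : s.Nonempty) (hst : (s ×ˢ t).Nonempty) {f : α × β → γ} {b₀ : β}
    (hb₀ : b₀ ∈ t) (hle : ∀ a ∈ s, ∀ b ∈ t, f (a, b) ≤ f (a, b₀)) :
    (s ×ˢ t).sup' hst f = s.sup' hs (fun a => f (a, b₀)) := by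
  apply le_antisymm
  · refine sup'_le _ _ fun ⟨a, b⟩ hab => ?_
    obtain ⟨ha, hb⟩ := mem_product.mp hab
    exact le_sup'_of_le _ ha (hle a ha b hb)
  · exact sup'_le _ _ fun a ha => le_sup' f (mem_product.mpr ⟨ha, hb₀⟩)

end Finset

noncomputable def tauPlugin (n₁ n a b : ℝ) : ℝ :=
  (a + 1) / (a + b + 2) - (n₁ - a + 1) / (n - a - b + 2)

theorem tauPlugin_le_tauPlugin_zero {n₁ n a b : ℝ} (ha : -1 ≤ a) (hb : 0 ≤ b)
    (han₁ : a ≤ n₁ + 1) (habn : a + b < n + 2) : tauPlugin n₁ n a b ≤ tauPlugin n₁ n a 0 := by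
  have hfirst : (a + 1) / (a + b + 2) ≤ (a + 1) / (a + 2) :=
    div_le_div_of_nonneg_left (by linarith) (by linarith) (by linarith)
  have hsecond : (n₁ - a + 1) / (n - a + 2) ≤ (n₁ - a + 1) / (n - a - b + 2) :=
    div_le_div_of_nonneg_left (by linarith) (by linarith) (by linarith)
  simp only [tauPlugin, add_zero, sub_zero]
  linarith

theorem tau_plugin_tight_optimistic_general (a b n₁ n : ℕ) (h1 : a ≤ n₁)
    (h3 : a + b ≤ n) :
    (Finset.range (a + 1) ×ˢ Finset.range (b + 1)).sup'
        (Finset.nonempty_range_add_one.product Finset.nonempty_range_add_one)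
        (fun ab : ℕ × ℕ =>
          ((ab.1 : ℝ) + 1) / ((ab.1 : ℝ) + (ab.2 : ℝ) + 2)
            - ((n₁ : ℝ) - (ab.1 : ℝ) + 1) / ((n : ℝ) - (ab.1 : ℝ) - (ab.2 : ℝ) + 2))
      = (Finset.range (a + 1)).sup' Finset.nonempty_range_add_one
          (fun a' : ℕ =>
            ((a' : ℝ) + 1) / ((a' : ℝ) + 2)
              - ((n₁ : ℝ) - (a' : ℝ) + 1) / ((n : ℝ) - (a' : ℝ) + 2)) := by
  refine (Finset.sup'_product_eq_sup'_of_le_right (t := Finset.range (b + 1))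
    (f := fun ab => tauPlugin n₁ n ab.1 ab.2)
    Finset.nonempty_range_add_one _ (Finset.mem_range.mpr b.succ_pos) ?_).trans ?_
  · intro a' ha' b' hb'
    rw [Finset.mem_range, Nat.lt_succ_iff] at ha' hb'
    have han₁ : (a' : ℝ) ≤ n₁ := by exact_mod_cast ha'.trans h1
    have habn : (a' : ℝ) + b' ≤ n := by exact_mod_cast (add_le_add ha' hb').trans h3
    have ha'₀ : (0 : ℝ) ≤ a' := a'.cast_nonneg
    simpa using tauPlugin_le_tauPlugin_zero (n₁ := n₁) (n := n) (by linarith) b'.cast_nonneg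
      (by linarith) (by linarith)
  · simp only [tauPlugin, Nat.cast_zero, add_zero, sub_zero]

/-- With `β = 0`, the maximum of the stratum score
`τ(a', b') = (a'+1)/(a'+b'+2) − (n₁−a'+1)/(n−a'−b'+2)` over all reachable
contingency-table configurations `C = {0,…,a} × {0,…,b}` is attained on the
line `b' = 0`. -/
theorem tau_plugin_tight_optimistic (a b n₁ n : ℕ) (h1 : a ≤ n₁) (h2 : n₁ ≤ n)
    (h3 : a + b ≤ n) :
    (Finset.range (a + 1) ×ˢ Finset.range (b + 1)).sup'
        (Finset.nonempty_range_add_one.product Finset.nonempty_range_add_one)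
        (fun ab : ℕ × ℕ =>
          ((ab.1 : ℝ) + 1) / ((ab.1 : ℝ) + (ab.2 : ℝ) + 2)
            - ((n₁ : ℝ) - (ab.1 : ℝ) + 1) / ((n : ℝ) - (ab.1 : ℝ) - (ab.2 : ℝ) + 2))
      = (Finset.range (a + 1)).sup' Finset.nonempty_range_add_one
          (fun a' : ℕ =>
            ((a' : ℝ) + 1) / ((a' : ℝ) + 2)
              - ((n₁ : ℝ) - (a' : ℝ) + 1) / ((n : ℝ) - (a' : ℝ) + 2)) :=
  tau_plugin_tight_optimistic_general a b n₁ n h1 h3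
end
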